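/- If w^H is a Poisson bivector on T*M (for a symmetric nonlinear connection), then w^H is compatible with the canonical Poisson structure W₀ (i.e. [w^H, W₀] = 0) if and only if ∂w^{ij}/∂x^k + w^{ih}Φ^j_{hk} − w^{jh}Φ^i_{hk} = 0 and w^{ih}R_{hjk} = 0, where Φ^j_{ik} = −∂N_{ik}/∂p_j. Moreover, by the Bianchi identity R_{kij} + R_{ijk} + R_{jki} = 0, the second condition implies the Poisson condition w^{il}w^{jh}R_{klh} = 0 for w^H. -/

import Mathlib

open scoped BigOperators
noncomputable section

/-- The model of the base manifold `M`: global coordinates `(x^i)` on an `n`-dimensional chart. -/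
abbrev Vec (n : ℕ) := Fin n → ℝ
/-- The model of the cotangent bundle `T*M`: points `(x, p)`. -/
abbrev Cot (n : ℕ) := Vec n × Vec n
/-- Index type for the `2n` coordinates `(x^i, p_i)` of `T*M`. -/
abbrev Idx (n : ℕ) := Fin n ⊕ Fin n

/-- Smoothness. -/
def Sm {E F : Type*} [NormedAddCommGroup E] [NormedSpace ℝ E]
    [NormedAddCommGroup F] [NormedSpace ℝ F] (f : E → F) : Prop := ContDiff ℝ (⊤ : ℕ∞) f

/-- Partial derivative `∂f/∂x^i` on the base. -/
def pd {n : ℕ} (i : Fin n) (f : Vec n → ℝ) (x : Vec n) : ℝ := fderiv ℝ f x (Pi.single i 1)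

/-- Coordinate direction in `T*M`. -/
def dirOf {n : ℕ} : Idx n → Cot n
  | Sum.inl i => (Pi.single i 1, 0)
  | Sum.inr i => (0, Pi.single i 1)

/-- Partial derivative on `T*M` in the direction of the `a`-th coordinate. -/
def DT {n : ℕ} (a : Idx n) (F : Cot n → ℝ) (z : Cot n) : ℝ := fderiv ℝ F z (dirOf a)
/-- `∂/∂x^i` on `T*M`. -/
def Dxx {n : ℕ} (i : Fin n) : (Cot n → ℝ) → Cot n → ℝ := DT (Sum.inl i)
/-- `∂/∂p_i` on `T*M`. -/
def Dpp {n : ℕ} (i : Fin n) : (Cot n → ℝ) → Cot n → ℝ := DT (Sum.inr i)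

/-- A bivector field on `T*M`, given by its component matrix `W^{AB}`
(the bivector is `(1/2) W^{AB} ∂_A ∧ ∂_B`). -/
abbrev Biv (n : ℕ) := Cot n → Idx n → Idx n → ℝ

/-- The bracket of functions on `T*M` defined by a bivector field `W`. -/
def bkt {n : ℕ} (W : Biv n) (F G : Cot n → ℝ) (z : Cot n) : ℝ :=
  ∑ a : Idx n, ∑ b : Idx n, W z a b * DT a F z * DT b G z

/-- The bracket of functions on `M` defined by a bivector field `w` on `M`
(components `w^{ij}`, the bivector being `(1/2) w^{ij} ∂_i ∧ ∂_j`). -/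
def bktM {n : ℕ} (w : Vec n → Fin n → Fin n → ℝ) (f g : Vec n → ℝ) (x : Vec n) : ℝ :=
  ∑ i, ∑ j, w x i j * pd i f x * pd j g x

def SkewT {n : ℕ} (W : Biv n) : Prop := ∀ z a b, W z a b = - W z b a
def SmoothT {n : ℕ} (W : Biv n) : Prop := ∀ a b, Sm fun z => W z a b
/-- The Jacobi identity for the bracket of `W`, i.e. `[W,W] = 0`. -/
def JacobiT {n : ℕ} (W : Biv n) : Prop :=
  ∀ F G H : Cot n → ℝ, Sm F → Sm G → Sm H → ∀ z,
    bkt W (bkt W F G) H z + bkt W (bkt W G H) F z + bkt W (bkt W H F) G z = 0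

def SkewM {n : ℕ} (w : Vec n → Fin n → Fin n → ℝ) : Prop := ∀ x i j, w x i j = - w x j i
def SmoothM {n : ℕ} (w : Vec n → Fin n → Fin n → ℝ) : Prop := ∀ i j, Sm fun x => w x i j
def JacobiM {n : ℕ} (w : Vec n → Fin n → Fin n → ℝ) : Prop :=
  ∀ f g h : Vec n → ℝ, Sm f → Sm g → Sm h → ∀ x,
    bktM w (bktM w f g) h x + bktM w (bktM w g h) f x + bktM w (bktM w h f) g x = 0

/-- A Poisson structure on `T*M`. -/
def PoissonT {n : ℕ} (W : Biv n) : Prop := SkewT W ∧ SmoothT W ∧ JacobiT W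
/-- A Poisson structure on `M`. -/
def PoissonM {n : ℕ} (w : Vec n → Fin n → Fin n → ℝ) : Prop := SkewM w ∧ SmoothM w ∧ JacobiM w

/-- `F : T*M → ℝ` is a fiberwise polynomial of degree `≤ k`. -/
def PolyDeg {n : ℕ} (k : ℕ) (F : Cot n → ℝ) : Prop :=
  ∃ P : Vec n → MvPolynomial (Fin n) ℝ, (∀ x, (P x).totalDegree ≤ k) ∧
    ∀ x p, F (x, p) = MvPolynomial.eval p (P x)

/-- `F : T*M → ℝ` is a fiberwise homogeneous polynomial of degree `k`. -/
def HomogPoly {n : ℕ} (k : ℕ) (F : Cot n → ℝ) : Prop :=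
  ∃ P : Vec n → MvPolynomial (Fin n) ℝ, (∀ x, (P x).IsHomogeneous k) ∧
    ∀ x p, F (x, p) = MvPolynomial.eval p (P x)

/-- Polynomially graded bivector field: brackets of fiberwise polynomials of degree `≤ h`
and `≤ k` are fiberwise polynomials of degree `≤ h + k`. -/
def PolyGraded {n : ℕ} (W : Biv n) : Prop :=
  ∀ (h k : ℕ) (F G : Cot n → ℝ), Sm F → Sm G → PolyDeg h F → PolyDeg k G →
    PolyDeg (h + k) (bkt W F G)

/-- Graded bivector field: brackets of fiberwise homogeneous polynomials of degrees `h`, `k`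
are fiberwise homogeneous of degree `h + k`. -/
def HGraded {n : ℕ} (W : Biv n) : Prop :=
  ∀ (h k : ℕ) (F G : Cot n → ℝ), Sm F → Sm G → HomogPoly h F → HomogPoly k G →
    HomogPoly (h + k) (bkt W F G)

/-- The momentum `m(X)` of a vector field `X` on `M`. -/
def mmt {n : ℕ} (X : Vec n → Vec n) (z : Cot n) : ℝ := ∑ i, z.2 i * X z.1 i

/-- The quadratic fiberwise polynomial `s(Q)` of a symmetric 2-contravariant tensor field. -/
def sQ {n : ℕ} (G : Vec n → Fin n → Fin n → ℝ) (z : Cot n) : ℝ :=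
  ∑ i, ∑ j, G z.1 i j * z.2 i * z.2 j

/-- `W` is `π`-related to `w`: the projection `π : T*M → M` is a Poisson mapping. -/
def PiRel {n : ℕ} (W : Biv n) (w : Vec n → Fin n → Fin n → ℝ) : Prop :=
  ∀ f g : Vec n → ℝ, Sm f → Sm g → ∀ z : Cot n,
    bkt W (fun y => f y.1) (fun y => g y.1) z = bktM w f g z.1

/-- Foliated function of the vertical foliation of `T*M`: constant on the fibers. -/
def FolV {n : ℕ} (F : Cot n → ℝ) : Prop := ∀ (x p p' : Vec n), F (x, p) = F (x, p')

/-- Transversal Poisson structure of the vertical foliation of `T*M`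
(semi-Poisson structure): the bracket restricts to a Lie bracket on foliated functions. -/
def SemiPoissonT {n : ℕ} (W : Biv n) : Prop :=
  (∀ F G, Sm F → Sm G → FolV F → FolV G → FolV (bkt W F G)) ∧
  (∀ F G H, Sm F → Sm G → Sm H → FolV F → FolV G → FolV H → ∀ z,
    bkt W (bkt W F G) H z + bkt W (bkt W G H) F z + bkt W (bkt W H F) G z = 0)

/-- The `w`-Hamiltonian vector field of `f` : `(X_f^w)^j = w^{ij} ∂_i f`. -/
def ham {n : ℕ} (w : Vec n → Fin n → Fin n → ℝ) (f : Vec n → ℝ) (x : Vec n) (j : Fin n) : ℝ :=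
  ∑ i, w x i j * pd i f x

/-- Contravariant derivative of a vector field, with coefficients
`D_{dx^i} ∂_j = -Γ^{ik}_j ∂_k`, applied in the direction `df`:
`(D_{df}X)^j = ∂_i f (w^{ib} ∂_b X^j - Γ^{ij}_k X^k)`. -/
def Dvec {n : ℕ} (w : Vec n → Fin n → Fin n → ℝ) (Γ : Vec n → Fin n → Fin n → Fin n → ℝ)
    (f : Vec n → ℝ) (X : Vec n → Vec n) (x : Vec n) (j : Fin n) : ℝ :=
  ∑ i, pd i f x *
    ((∑ b, w x i b * pd b (fun y => X y j) x) - ∑ k, Γ x i j k * X x k)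

/-- The extension of the contravariant derivative `D_{df}` to symmetric 2-tensor fields. -/
def Dten2 {n : ℕ} (w : Vec n → Fin n → Fin n → ℝ) (Γ : Vec n → Fin n → Fin n → Fin n → ℝ)
    (f : Vec n → ℝ) (G : Vec n → Fin n → Fin n → ℝ) (x : Vec n) (i j : Fin n) : ℝ :=
  (∑ a, ∑ b, w x a b * pd a f x * pd b (fun y => G y i j) x)
   - (∑ a, ∑ h, pd a f x * Γ x a i h * G x h j)
   - (∑ a, ∑ h, pd a f x * Γ x a j h * G x i h)

def SmoothVF {n : ℕ} (X : Vec n → Vec n) : Prop := ∀ i, Sm fun x => X x i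
def SmoothGam {n : ℕ} (Γ : Vec n → Fin n → Fin n → Fin n → ℝ) : Prop :=
  ∀ i j k, Sm fun x => Γ x i j k

/-- The horizontal derivative `δ/δx^i = ∂/∂x^i - N_{ia} ∂/∂p_a`. -/
def delx {n : ℕ} (N : Cot n → Fin n → Fin n → ℝ) (i : Fin n) (F : Cot n → ℝ) (z : Cot n) : ℝ :=
  Dxx i F z - ∑ a, N z i a * Dpp a F z

/-- The curvature `R_{kij} = δN_{kj}/δx^i - δN_{ki}/δx^j`. -/
def curvN {n : ℕ} (N : Cot n → Fin n → Fin n → ℝ) (z : Cot n) (k i j : Fin n) : ℝ :=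
  delx N i (fun y => N y k j) z - delx N j (fun y => N y k i) z

/-- The horizontal lift `w^H = (1/2) w^{ij} δ/δx^i ∧ δ/δx^j`, in natural coordinates. -/
def WH {n : ℕ} (w : Vec n → Fin n → Fin n → ℝ) (N : Cot n → Fin n → Fin n → ℝ) : Biv n :=
  fun z a b =>
    match a, b with
    | Sum.inl i, Sum.inl j => w z.1 i j
    | Sum.inl i, Sum.inr b => -∑ j, w z.1 i j * N z j b
    | Sum.inr a, Sum.inl j => ∑ i, w z.1 j i * N z i a
    | Sum.inr a, Sum.inr b => ∑ i, ∑ j, w z.1 i j * N z i a * N z j b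

/-- The canonical Poisson bivector `W₀ = ∂/∂p_i ∧ ∂/∂x^i` of `T*M`. -/
def W0c {n : ℕ} : Biv n := fun _ a b =>
  match a, b with
  | Sum.inr i, Sum.inl j => if i = j then (1:ℝ) else 0
  | Sum.inl i, Sum.inr j => if i = j then (-1:ℝ) else 0
  | _, _ => 0

/-- Compatibility `[P,Q] = 0` of two Poisson bivectors, via the mixed Jacobi identity. -/
def Compat {n : ℕ} (P Q : Biv n) : Prop :=
  ∀ F G H : Cot n → ℝ, Sm F → Sm G → Sm H → ∀ z,
    (bkt P (bkt Q F G) H z + bkt P (bkt Q G H) F z + bkt P (bkt Q H F) G z)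
    + (bkt Q (bkt P F G) H z + bkt Q (bkt P G H) F z + bkt Q (bkt P H F) G z) = 0

/-- `Φ^j_{ik} = -∂N_{ik}/∂p_j`. -/
def PhiN {n : ℕ} (N : Cot n → Fin n → Fin n → ℝ) (z : Cot n) (j i k : Fin n) : ℝ :=
  -(Dpp j (fun y => N y i k) z)

section Infra

variable {n : ℕ}

lemma Sm.dAt {E F : Type*} [NormedAddCommGroup E] [NormedSpace ℝ E]
    [NormedAddCommGroup F] [NormedSpace ℝ F] {f : E → F} (hf : Sm f) (x : E) :
    DifferentiableAt ℝ f x := (hf.differentiable (by simp)).differentiableAt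

lemma DT_const (a : Idx n) (c : ℝ) (z : Cot n) : DT a (fun _ => c) z = 0 := by
  simp [DT]

lemma DT_neg (a : Idx n) (F : Cot n → ℝ) (z : Cot n) :
    DT a (fun y => -(F y)) z = -(DT a F z) := by
  simp [DT, fderiv_neg]

lemma DT_mul {F G : Cot n → ℝ} (a : Idx n) (z : Cot n)
    (hF : DifferentiableAt ℝ F z) (hG : DifferentiableAt ℝ G z) :
    DT a (fun y => F y * G y) z = DT a F z * G z + F z * DT a G z := by
  unfold DT
  rw [fderiv_fun_mul hF hG]
  simp only [ContinuousLinearMap.add_apply, ContinuousLinearMap.smul_apply, smul_eq_mul]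
  ring

lemma DT_sum {ι : Type*} (s : Finset ι) (f : ι → Cot n → ℝ) (a : Idx n) (z : Cot n)
    (hf : ∀ i ∈ s, DifferentiableAt ℝ (f i) z) :
    DT a (fun y => ∑ i ∈ s, f i y) z = ∑ i ∈ s, DT a (f i) z := by
  unfold DT
  rw [fderiv_fun_sum hf]
  simp

lemma Sm.DTs {F : Cot n → ℝ} (hF : Sm F) (a : Idx n) : Sm (DT a F) :=
  (hF.fderiv_right (by simp)).clm_apply contDiff_const

lemma DT_comm {F : Cot n → ℝ} (hF : Sm F) (a b : Idx n) (z : Cot n) :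
    DT a (DT b F) z = DT b (DT a F) z := by
  have hd : Differentiable ℝ (fderiv ℝ F) := (hF.fderiv_right (WithTop.coe_le_coe.mpr le_top : (1 : WithTop ℕ∞) + 1 ≤ ((⊤ : ℕ∞) : WithTop ℕ∞))).differentiable one_ne_zero
  have key : ∀ c d : Idx n, DT c (DT d F) z = fderiv ℝ (fderiv ℝ F) z (dirOf c) (dirOf d) := by
    intro c d
    unfold DT
    rw [fderiv_clm_apply (hd z) (differentiableAt_const _)]
    simp
  rw [key, key]
  exact (hF.contDiffAt.isSymmSndFDerivAt (by simp; exact WithTop.coe_le_coe.mpr le_top)).eq _ _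

lemma fderiv_base (f : Vec n → ℝ) (hf : Sm f) (z : Cot n) :
    fderiv ℝ (fun y : Cot n => f y.1) z
      = (fderiv ℝ f z.1).comp (ContinuousLinearMap.fst ℝ (Vec n) (Vec n)) :=
  (((hf.dAt z.1).hasFDerivAt).comp z hasFDerivAt_fst).fderiv

lemma Dxx_base (f : Vec n → ℝ) (hf : Sm f) (i : Fin n) (z : Cot n) :
    Dxx i (fun y => f y.1) z = pd i f z.1 := by
  unfold Dxx DT
  rw [fderiv_base f hf z]
  simp [dirOf, pd]

lemma Dpp_base (f : Vec n → ℝ) (hf : Sm f) (i : Fin n) (z : Cot n) :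
    Dpp i (fun y => f y.1) z = 0 := by
  unfold Dpp DT
  rw [fderiv_base f hf z]
  simp [dirOf]

lemma Sm_base (f : Vec n → ℝ) (hf : Sm f) : Sm (fun y : Cot n => f y.1) :=
  hf.comp contDiff_fst

/-- coordinate function x^i -/
lemma Sm_cx (i : Fin n) : Sm (fun z : Cot n => z.1 i) :=
  ((ContinuousLinearMap.proj (R := ℝ) (φ := fun _ : Fin n => ℝ) i).comp
    (ContinuousLinearMap.fst ℝ (Vec n) (Vec n))).contDiff

lemma Sm_cp (i : Fin n) : Sm (fun z : Cot n => z.2 i) :=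
  ((ContinuousLinearMap.proj (R := ℝ) (φ := fun _ : Fin n => ℝ) i).comp
    (ContinuousLinearMap.snd ℝ (Vec n) (Vec n))).contDiff

lemma DT_cx (i : Fin n) (a : Idx n) (z : Cot n) :
    DT a (fun z : Cot n => z.1 i) z = if a = Sum.inl i then 1 else 0 := by
  have : (fun z : Cot n => z.1 i) = fun z => ((ContinuousLinearMap.proj (R := ℝ)
      (φ := fun _ : Fin n => ℝ) i).comp (ContinuousLinearMap.fst ℝ (Vec n) (Vec n))) z := rfl
  unfold DT
  rw [this, ContinuousLinearMap.fderiv]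
  cases a with
  | inl j => simp [dirOf, Pi.single_apply, eq_comm]
  | inr j => simp [dirOf]

lemma DT_cp (i : Fin n) (a : Idx n) (z : Cot n) :
    DT a (fun z : Cot n => z.2 i) z = if a = Sum.inr i then 1 else 0 := by
  have : (fun z : Cot n => z.2 i) = fun z => ((ContinuousLinearMap.proj (R := ℝ)
      (φ := fun _ : Fin n => ℝ) i).comp (ContinuousLinearMap.snd ℝ (Vec n) (Vec n))) z := rfl
  unfold DT
  rw [this, ContinuousLinearMap.fderiv]
  cases a with
  | inl j => simp [dirOf]
  | inr j => simp [dirOf, Pi.single_apply, eq_comm]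

end Infra
section Sums

variable {n : ℕ}

lemma sum2_swap {I M : Type*} [Fintype I] [AddCommMonoid M] (t : I → I → M) :
    ∑ a, ∑ b, t a b = ∑ a, ∑ b, t b a := Finset.sum_comm

lemma sum3_rot {I M : Type*} [Fintype I] [AddCommMonoid M] (t : I → I → I → M) :
    ∑ a, ∑ b, ∑ d, t a b d = ∑ a, ∑ b, ∑ d, t d a b := by
  rw [Finset.sum_comm]
  exact Finset.sum_congr rfl fun b _ => Finset.sum_comm

lemma sum3_rot' {I M : Type*} [Fintype I] [AddCommMonoid M] (t : I → I → I → M) :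
    ∑ a, ∑ b, ∑ d, t a b d = ∑ a, ∑ b, ∑ d, t b d a := by
  rw [sum3_rot, sum3_rot]

lemma sum_rot_out {I J M : Type*} [Fintype I] [Fintype J] [AddCommMonoid M]
    (t : J → I → I → M) :
    ∑ j, ∑ a, ∑ b, t j a b = ∑ a, ∑ b, ∑ j, t j a b := by
  rw [Finset.sum_comm]
  exact Finset.sum_congr rfl fun a _ => Finset.sum_comm

lemma sum4_pairswap {I M : Type*} [Fintype I] [AddCommMonoid M] (t : I → I → I → I → M) :
    ∑ c, ∑ d, ∑ a, ∑ b, t c d a b = ∑ c, ∑ d, ∑ a, ∑ b, t a b c d := by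
  have e : ∀ u : I → I → I → I → M, (∑ p : I × I, ∑ q : I × I, u p.1 p.2 q.1 q.2)
      = ∑ c, ∑ d, ∑ a, ∑ b, u c d a b := by
    intro u
    simp only [Fintype.sum_prod_type]
  rw [← e t, ← e (fun c d a b => t a b c d), Finset.sum_comm]

lemma sum2_cancel {I : Type*} [Fintype I] (X Y : I → I → ℝ)
    (h : ∀ a b, Y a b = - X b a) :
    ((∑ a, ∑ b, X a b) + (∑ a, ∑ b, Y a b)) = 0 := by
  have : ∑ a, ∑ b, Y a b = - ∑ a, ∑ b, X b a := by
    simp_rw [h]; simp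
  rw [this, sum2_swap X]
  ring

end Sums

section WHprops

variable {n : ℕ} {w : Vec n → Fin n → Fin n → ℝ} {N : Cot n → Fin n → Fin n → ℝ}

lemma skewWH (hsk : SkewM w) : SkewT (WH w N) := by
  intro z a b
  cases a with
  | inl i => cases b with
    | inl j => exact hsk z.1 i j
    | inr b => simp [WH]
  | inr a => cases b with
    | inl j => simp [WH]
    | inr b =>
        simp only [WH]
        rw [sum2_swap (fun i j => w z.1 i j * N z i a * N z j b), ← Finset.sum_neg_distrib]
        refine Finset.sum_congr rfl fun i _ => ?_
        rw [← Finset.sum_neg_distrib]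
        refine Finset.sum_congr rfl fun j _ => ?_
        rw [hsk z.1 j i]; ring

lemma smoothWH (hsm : SmoothM w) (hNsm : ∀ i j, Sm fun z => N z i j) :
    SmoothT (WH w N) := by
  intro a b
  have hw : ∀ i j, Sm fun z : Cot n => w z.1 i j := fun i j => Sm_base _ (hsm i j)
  cases a with
  | inl i => cases b with
    | inl j => exact hw i j
    | inr b => exact (ContDiff.sum fun j _ => (hw i j).mul (hNsm j b)).neg
  | inr a => cases b with
    | inl j => exact ContDiff.sum fun i _ => (hw j i).mul (hNsm i a)
    | inr b => exact ContDiff.sum fun i _ =>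
        ContDiff.sum fun j _ => ((hw i j).mul (hNsm i a)).mul (hNsm j b)

end WHprops
section Expand

variable {n : ℕ}

lemma sum2_congr {I M : Type*} [Fintype I] [AddCommMonoid M] {f g : I → I → M}
    (h : ∀ a b, f a b = g a b) : ∑ a, ∑ b, f a b = ∑ a, ∑ b, g a b := by
  refine Finset.sum_congr rfl fun a _ => Finset.sum_congr rfl fun b _ => h a b

lemma sum3_congr {I M : Type*} [Fintype I] [AddCommMonoid M] {f g : I → I → I → M}
    (h : ∀ a b c, f a b c = g a b c) :
    ∑ a, ∑ b, ∑ c, f a b c = ∑ a, ∑ b, ∑ c, g a b c := by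
  refine Finset.sum_congr rfl fun a _ => sum2_congr (h a)

lemma sum4_congr {I M : Type*} [Fintype I] [AddCommMonoid M] {f g : I → I → I → I → M}
    (h : ∀ a b c d, f a b c d = g a b c d) :
    ∑ a, ∑ b, ∑ c, ∑ d, f a b c d = ∑ a, ∑ b, ∑ c, ∑ d, g a b c d := by
  refine Finset.sum_congr rfl fun a _ => sum3_congr (h a)

/-- second-derivative block -/
def SD (W V : Biv n) (F G H : Cot n → ℝ) (z : Cot n) : ℝ :=
  ∑ c, ∑ d, ∑ a, ∑ b, W z c d * V z a b * DT c (DT a F) z * DT b G z * DT d H z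

/-- first-order (component-derivative) block -/
def FD (W V : Biv n) (F G H : Cot n → ℝ) (z : Cot n) : ℝ :=
  ∑ c, ∑ d, ∑ a, ∑ b,
    W z c d * DT c (fun y => V y a b) z * DT a F z * DT b G z * DT d H z

lemma DT_bkt (V : Biv n) (hVs : SmoothT V) (F G : Cot n → ℝ) (hF : Sm F) (hG : Sm G)
    (c : Idx n) (z : Cot n) :
    DT c (bkt V F G) z = ∑ a, ∑ b, (DT c (fun y => V y a b) z * DT a F z * DT b G z
      + V z a b * DT c (DT a F) z * DT b G z + V z a b * DT a F z * DT c (DT b G) z) := by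
  have hin : ∀ a b : Idx n, Sm (fun y => V y a b * DT a F y * DT b G y) :=
    fun a b => ((hVs a b).mul (hF.DTs a)).mul (hG.DTs b)
  have h1 : bkt V F G = fun y => ∑ a : Idx n, (fun y' => ∑ b : Idx n,
      V y' a b * DT a F y' * DT b G y') y := rfl
  rw [h1, DT_sum Finset.univ _ c z
    (fun a _ => Sm.dAt (ContDiff.sum (fun b _ => hin a b)) z)]
  refine Finset.sum_congr rfl fun a _ => ?_
  rw [DT_sum Finset.univ _ c z (fun b _ => Sm.dAt (hin a b) z)]
  refine Finset.sum_congr rfl fun b _ => ?_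
  rw [DT_mul c z (Sm.dAt ((hVs a b).mul (hF.DTs a)) z) (Sm.dAt (hG.DTs b) z),
      DT_mul c z (Sm.dAt (hVs a b) z) (Sm.dAt (hF.DTs a) z)]
  ring

lemma bkt_expand (W V : Biv n) (hVs : SmoothT V) (hVk : SkewT V)
    (F G H : Cot n → ℝ) (hF : Sm F) (hG : Sm G) (z : Cot n) :
    bkt W (bkt V F G) H z = FD W V F G H z + SD W V F G H z - SD W V G F H z := by
  have key : ∀ c d : Idx n, W z c d * DT c (bkt V F G) z * DT d H z
      = ∑ a, ∑ b, (W z c d * DT c (fun y => V y a b) z * DT a F z * DT b G z * DT d H z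
         + W z c d * V z a b * DT c (DT a F) z * DT b G z * DT d H z
         + W z c d * V z a b * DT a F z * DT c (DT b G) z * DT d H z) := by
    intro c d
    rw [DT_bkt V hVs F G hF hG c z]
    simp only [Finset.mul_sum, Finset.sum_mul]
    exact sum2_congr fun a b => by ring
  have h0 : bkt W (bkt V F G) H z = ∑ c, ∑ d : Idx n,
      W z c d * DT c (bkt V F G) z * DT d H z := rfl
  rw [h0, sum2_congr key]
  simp only [Finset.sum_add_distrib]
  have e3 : (∑ c, ∑ d, ∑ a, ∑ b : Idx n,
      W z c d * V z a b * DT a F z * DT c (DT b G) z * DT d H z)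
      = - SD W V G F H z := by
    unfold SD
    rw [← Finset.sum_neg_distrib]
    refine Finset.sum_congr rfl fun c _ => ?_
    rw [← Finset.sum_neg_distrib]
    refine Finset.sum_congr rfl fun d _ => ?_
    rw [sum2_swap (fun a b => W z c d * V z a b * DT a F z * DT c (DT b G) z * DT d H z),
        ← Finset.sum_neg_distrib]
    refine Finset.sum_congr rfl fun a _ => ?_
    rw [← Finset.sum_neg_distrib]
    refine Finset.sum_congr rfl fun b _ => ?_
    rw [hVk z b a]
    ring
  rw [e3]
  unfold FD SD
  ring

lemma SD_swap (W V : Biv n) (F G H : Cot n → ℝ) (hF : Sm F) (z : Cot n) :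
    SD W V F G H z = SD V W F H G z := by
  unfold SD
  rw [sum4_pairswap (fun c d a b =>
    W z c d * V z a b * DT c (DT a F) z * DT b G z * DT d H z)]
  exact sum4_congr fun c d a b => by rw [DT_comm hF]; ring

lemma FD_rconst (W : Biv n) (F G H : Cot n → ℝ) (z : Cot n) :
    FD W W0c F G H z = 0 := by
  unfold FD
  refine Finset.sum_eq_zero fun c _ => Finset.sum_eq_zero fun d _ =>
    Finset.sum_eq_zero fun a _ => Finset.sum_eq_zero fun b _ => ?_
  have hc : (fun y : Cot n => W0c y a b) = fun _ : Cot n => W0c z a b := rfl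
  rw [hc, DT_const]
  ring

lemma sumW0 (z : Cot n) (f : Idx n → Idx n → ℝ) :
    ∑ c, ∑ d, W0c (n := n) z c d * f c d
      = ∑ i, (f (Sum.inr i) (Sum.inl i) - f (Sum.inl i) (Sum.inr i)) := by
  rw [Fintype.sum_sum_type]
  have h1 : ∀ i : Fin n, (∑ d : Idx n, W0c (n := n) z (Sum.inl i) d * f (Sum.inl i) d)
      = - f (Sum.inl i) (Sum.inr i) := by
    intro i
    rw [Fintype.sum_sum_type]
    simp [W0c, ite_mul]
  have h2 : ∀ i : Fin n, (∑ d : Idx n, W0c (n := n) z (Sum.inr i) d * f (Sum.inr i) d)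
      = f (Sum.inr i) (Sum.inl i) := by
    intro i
    rw [Fintype.sum_sum_type]
    simp [W0c, ite_mul]
  simp only [h1, h2]
  rw [Finset.sum_sub_distrib, Finset.sum_neg_distrib]
  ring

end Expand
section Sigma

variable {n : ℕ}

def tilde : Idx n → (Cot n → ℝ) → Cot n → ℝ
  | Sum.inl j => Dpp j
  | Sum.inr j => fun F z => -(Dxx j F z)

lemma tilde_inl (j : Fin n) (F : Cot n → ℝ) (z : Cot n) :
    tilde (Sum.inl j) F z = DT (Sum.inr j) F z := rfl

lemma tilde_inr (j : Fin n) (F : Cot n → ℝ) (z : Cot n) :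
    tilde (Sum.inr j) F z = -(DT (Sum.inl j) F z) := rfl

def Ttri (w : Vec n → Fin n → Fin n → ℝ) (N : Cot n → Fin n → Fin n → ℝ)
    (z : Cot n) (a b d : Idx n) : ℝ :=
  tilde a (fun y => WH w N y b d) z + tilde b (fun y => WH w N y d a) z
    + tilde d (fun y => WH w N y a b) z

lemma FD_tilde (V : Biv n) (F G H : Cot n → ℝ) (z : Cot n) :
    FD W0c V F G H z
      = ∑ a, ∑ b, ∑ d, tilde d (fun y => V y a b) z * DT a F z * DT b G z * DT d H z := by
  have h : FD W0c V F G H z = ∑ c, ∑ d, W0c (n := n) z c d *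
      (∑ a, ∑ b, DT c (fun y => V y a b) z * DT a F z * DT b G z * DT d H z) := by
    unfold FD
    refine sum2_congr fun c d => ?_
    simp only [Finset.mul_sum]
    exact sum2_congr fun a b => by ring
  rw [h, sumW0]
  have hR : (∑ a, ∑ b, ∑ d, tilde d (fun y => V y a b) z * DT a F z * DT b G z * DT d H z)
      = ∑ a, ∑ b, ∑ i : Fin n,
          (DT (Sum.inr i) (fun y => V y a b) z * DT a F z * DT b G z * DT (Sum.inl i) H z
           - DT (Sum.inl i) (fun y => V y a b) z * DT a F z * DT b G z
              * DT (Sum.inr i) H z) := by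
    refine sum2_congr fun a b => ?_
    rw [Fintype.sum_sum_type, ← Finset.sum_add_distrib]
    refine Finset.sum_congr rfl fun i _ => ?_
    rw [tilde_inl, tilde_inr]
    ring
  rw [hR]
  have hL : ∀ i : Fin n,
      ((∑ a, ∑ b, DT (Sum.inr i) (fun y => V y a b) z * DT a F z * DT b G z
          * DT (Sum.inl i) H z)
       - ∑ a, ∑ b, DT (Sum.inl i) (fun y => V y a b) z * DT a F z * DT b G z
          * DT (Sum.inr i) H z)
      = ∑ a, ∑ b,
          (DT (Sum.inr i) (fun y => V y a b) z * DT a F z * DT b G z * DT (Sum.inl i) H z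
           - DT (Sum.inl i) (fun y => V y a b) z * DT a F z * DT b G z
              * DT (Sum.inr i) H z) := by
    intro i
    rw [← Finset.sum_sub_distrib]
    exact Finset.sum_congr rfl fun a _ => (Finset.sum_sub_distrib _ _).symm
  simp only [hL]
  exact sum_rot_out (fun i a b =>
    DT (Sum.inr i) (fun y => V y a b) z * DT a F z * DT b G z * DT (Sum.inl i) H z
      - DT (Sum.inl i) (fun y => V y a b) z * DT a F z * DT b G z * DT (Sum.inr i) H z)

lemma FDsum (w : Vec n → Fin n → Fin n → ℝ) (N : Cot n → Fin n → Fin n → ℝ)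
    (F G H : Cot n → ℝ) (z : Cot n) :
    FD W0c (WH w N) F G H z + FD W0c (WH w N) G H F z + FD W0c (WH w N) H F G z
      = ∑ a, ∑ b, ∑ d, Ttri w N z a b d * DT a F z * DT b G z * DT d H z := by
  rw [FD_tilde, FD_tilde, FD_tilde]
  have h2 : (∑ a, ∑ b, ∑ d, tilde d (fun y => WH w N y a b) z * DT a G z * DT b H z
        * DT d F z)
      = ∑ a, ∑ b, ∑ d, tilde a (fun y => WH w N y b d) z * DT a F z * DT b G z
        * DT d H z := by
    rw [sum3_rot' (fun a b d => tilde d (fun y => WH w N y a b) z * DT a G z * DT b H z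
      * DT d F z)]
    exact sum3_congr fun a b d => by ring
  have h3 : (∑ a, ∑ b, ∑ d, tilde d (fun y => WH w N y a b) z * DT a H z * DT b F z
        * DT d G z)
      = ∑ a, ∑ b, ∑ d, tilde b (fun y => WH w N y d a) z * DT a F z * DT b G z
        * DT d H z := by
    rw [sum3_rot (fun a b d => tilde d (fun y => WH w N y a b) z * DT a H z * DT b F z
      * DT d G z)]
    exact sum3_congr fun a b d => by ring
  rw [h2, h3]
  simp only [← Finset.sum_add_distrib]
  exact sum3_congr fun a b d => by unfold Ttri; ring

theorem Sigma_eq (w : Vec n → Fin n → Fin n → ℝ) (hsk : SkewM w) (hsm : SmoothM w)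
    (N : Cot n → Fin n → Fin n → ℝ) (hNsm : ∀ i j, Sm fun z => N z i j)
    (F G H : Cot n → ℝ) (hF : Sm F) (hG : Sm G) (hH : Sm H) (z : Cot n) :
    (bkt (WH w N) (bkt W0c F G) H z + bkt (WH w N) (bkt W0c G H) F z
      + bkt (WH w N) (bkt W0c H F) G z)
    + (bkt W0c (bkt (WH w N) F G) H z + bkt W0c (bkt (WH w N) G H) F z
      + bkt W0c (bkt (WH w N) H F) G z)
    = ∑ a, ∑ b, ∑ d, Ttri w N z a b d * DT a F z * DT b G z * DT d H z := by
  set P := WH w N with hP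
  have hPs : SmoothT P := smoothWH hsm hNsm
  have hPk : SkewT P := skewWH hsk
  have hQs : SmoothT (W0c (n := n)) := by
    intro a b
    have : (fun z : Cot n => W0c z a b) = fun _ : Cot n => W0c z a b := rfl
    rw [this]; exact contDiff_const
  have hQk : SkewT (W0c (n := n)) := by
    intro z a b
    rcases a with i | i <;> rcases b with j | j
    · simp [W0c]
    · by_cases h : i = j
      · subst h; simp [W0c]
      · simp [W0c, h, Ne.symm h]
    · by_cases h : i = j
      · subst h; simp [W0c]
      · simp [W0c, h, Ne.symm h]
    · simp [W0c]
  rw [bkt_expand P W0c hQs hQk F G H hF hG z,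
      bkt_expand P W0c hQs hQk G H F hG hH z,
      bkt_expand P W0c hQs hQk H F G hH hF z,
      bkt_expand W0c P hPs hPk F G H hF hG z,
      bkt_expand W0c P hPs hPk G H F hG hH z,
      bkt_expand W0c P hPs hPk H F G hH hF z,
      FD_rconst, FD_rconst, FD_rconst]
  have s1 : SD P W0c F G H z = SD W0c P F H G z := SD_swap _ _ _ _ _ hF z
  have s2 : SD P W0c G H F z = SD W0c P G F H z := SD_swap _ _ _ _ _ hG z
  have s3 : SD P W0c H F G z = SD W0c P H G F z := SD_swap _ _ _ _ _ hH z
  have s4 : SD W0c P F G H z = SD P W0c F H G z := SD_swap _ _ _ _ _ hF z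
  have s5 : SD W0c P G H F z = SD P W0c G F H z := SD_swap _ _ _ _ _ hG z
  have s6 : SD W0c P H F G z = SD P W0c H G F z := SD_swap _ _ _ _ _ hH z
  rw [← FDsum w N F G H z]
  linarith [s1, s2, s3, s4, s5, s6]

end Sigma
section Alg

variable {n : ℕ}

lemma sum3_cancel_rot {I : Type*} [Fintype I] (X Y : I → I → I → ℝ)
    (h : ∀ a b c, Y b c a = - X a b c) :
    ((∑ a, ∑ b, ∑ c, X a b c) + (∑ a, ∑ b, ∑ c, Y a b c)) = 0 := by
  have h1 : ∑ a, ∑ b, ∑ c, Y a b c = ∑ a, ∑ b, ∑ c, Y b c a := sum3_rot' Y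
  rw [h1]
  have h2 : ∑ a, ∑ b, ∑ c, Y b c a = ∑ a, ∑ b, ∑ c, (- X a b c) :=
    sum3_congr h
  rw [h2]
  simp only [Finset.sum_neg_distrib]
  ring

lemma sum3_cancel_rev {I : Type*} [Fintype I] (X Y : I → I → I → ℝ)
    (h : ∀ a b c, Y c b a = - X a b c) :
    ((∑ a, ∑ b, ∑ c, X a b c) + (∑ a, ∑ b, ∑ c, Y a b c)) = 0 := by
  have h1 : ∑ a, ∑ b, ∑ c, Y a b c = ∑ a, ∑ b, ∑ c, Y c b a := by
    rw [sum3_rot Y]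
    exact Finset.sum_comm
  rw [h1]
  have h2 : ∑ a, ∑ b, ∑ c, Y c b a = ∑ a, ∑ b, ∑ c, (- X a b c) :=
    sum3_congr h
  rw [h2]
  simp only [Finset.sum_neg_distrib]
  ring

lemma key2alg (W nn : Fin n → Fin n → ℝ) (dp dx pw : Fin n → Fin n → Fin n → ℝ)
    (hW : ∀ a b, W a b = -W b a) (hnn : ∀ a b, nn a b = nn b a)
    (hc1 : ∀ k i j, pw k i j = ∑ h, (W i h * dp j h k - W j h * dp i h k))
    (i j k : Fin n) :
    (∑ l, ∑ h, W l h * (dp i l j * nn h k + nn l j * dp i h k))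
     - (∑ h, (pw j i h * nn h k + W i h * dx j h k))
     + (∑ h, (pw k i h * nn h j + W i h * dx k h j))
    = -∑ h, W i h * ((dx j h k - ∑ a, nn j a * dp a h k)
        - (dx k h j - ∑ a, nn k a * dp a h j)) := by
  have c1 : (∑ l, ∑ h, W l h * (dp i l j * nn h k + nn l j * dp i h k))
      = (∑ l, ∑ h, W l h * dp i l j * nn h k)
        + (∑ l, ∑ h, W l h * nn l j * dp i h k) := by
    rw [← Finset.sum_add_distrib]
    refine Finset.sum_congr rfl fun l _ => ?_
    rw [← Finset.sum_add_distrib]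
    exact Finset.sum_congr rfl fun h _ => by ring
  have c2 : (∑ h, (pw j i h * nn h k + W i h * dx j h k))
      = ((∑ h, ∑ b, W i b * dp h b j * nn h k)
          - (∑ h, ∑ b, W h b * dp i b j * nn h k))
        + ∑ h, W i h * dx j h k := by
    rw [← Finset.sum_sub_distrib, ← Finset.sum_add_distrib]
    refine Finset.sum_congr rfl fun h _ => ?_
    rw [hc1 j i h, Finset.sum_mul, ← Finset.sum_sub_distrib]
    have : ∑ b, (W i b * dp h b j - W h b * dp i b j) * nn h k
        = ∑ b, (W i b * dp h b j * nn h k - W h b * dp i b j * nn h k) :=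
      Finset.sum_congr rfl fun b _ => by ring
    rw [this]
  have c3 : (∑ h, (pw k i h * nn h j + W i h * dx k h j))
      = ((∑ h, ∑ b, W i b * dp h b k * nn h j)
          - (∑ h, ∑ b, W h b * dp i b k * nn h j))
        + ∑ h, W i h * dx k h j := by
    rw [← Finset.sum_sub_distrib, ← Finset.sum_add_distrib]
    refine Finset.sum_congr rfl fun h _ => ?_
    rw [hc1 k i h, Finset.sum_mul, ← Finset.sum_sub_distrib]
    have : ∑ b, (W i b * dp h b k - W h b * dp i b k) * nn h j
        = ∑ b, (W i b * dp h b k * nn h j - W h b * dp i b k * nn h j) :=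
      Finset.sum_congr rfl fun b _ => by ring
    rw [this]
  have c4 : (∑ h, W i h * ((dx j h k - ∑ a, nn j a * dp a h k)
        - (dx k h j - ∑ a, nn k a * dp a h j)))
      = (((∑ h, W i h * dx j h k) - (∑ h, ∑ a, W i h * (nn j a * dp a h k)))
          - (∑ h, W i h * dx k h j)) + (∑ h, ∑ a, W i h * (nn k a * dp a h j)) := by
    rw [← Finset.sum_sub_distrib, ← Finset.sum_sub_distrib, ← Finset.sum_add_distrib]
    refine Finset.sum_congr rfl fun h _ => ?_
    rw [← Finset.mul_sum, ← Finset.mul_sum]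
    ring
  have g1 : ((∑ l, ∑ h, W l h * dp i l j * nn h k)
      + (∑ h, ∑ b, W h b * dp i b j * nn h k)) = 0 :=
    sum2_cancel _ _ (fun a b => by rw [hW a b]; ring)
  have g2 : (∑ h, ∑ b, W h b * dp i b k * nn h j)
      = (∑ l, ∑ h, W l h * nn l j * dp i h k) :=
    sum2_congr fun x y => by ring
  have g3 : (∑ h, ∑ b, W i b * dp h b j * nn h k)
      = (∑ h, ∑ a, W i h * (nn k a * dp a h j)) := by
    rw [sum2_swap (fun x y => W i y * dp x y j * nn x k)]
    exact sum2_congr fun x y => by rw [hnn y k]; ring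
  have g4 : (∑ h, ∑ b, W i b * dp h b k * nn h j)
      = (∑ h, ∑ a, W i h * (nn j a * dp a h k)) := by
    rw [sum2_swap (fun x y => W i y * dp x y k * nn x j)]
    exact sum2_congr fun x y => by rw [hnn y j]; ring
  rw [c1, c2, c3, c4]
  linarith [g1, g2, g3, g4]

end Alg
section Alg3

variable {n : ℕ}

lemma key3alg (W nn : Fin n → Fin n → ℝ) (dp dx pw : Fin n → Fin n → Fin n → ℝ)
    (hW : ∀ a b, W a b = -W b a) (hnn : ∀ a b, nn a b = nn b a)
    (hc1 : ∀ k i j, pw k i j = ∑ h, (W i h * dp j h k - W j h * dp i h k))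
    (hc2 : ∀ i j k, (∑ h, W i h * ((dx j h k - ∑ a, nn j a * dp a h k)
        - (dx k h j - ∑ a, nn k a * dp a h j))) = 0)
    (i j k : Fin n) :
    (∑ l, ∑ h, (pw i l h * (nn l j * nn h k)
        + W l h * (dx i l j * nn h k + nn l j * dx i h k)))
    + (∑ l, ∑ h, (pw j l h * (nn l k * nn h i)
        + W l h * (dx j l k * nn h i + nn l k * dx j h i)))
    + (∑ l, ∑ h, (pw k l h * (nn l i * nn h j)
        + W l h * (dx k l i * nn h j + nn l i * dx k h j))) = 0 := by
  -- flipped form of hc2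
  have hc2' : ∀ h α β, (∑ l, W l h * ((dx α l β - ∑ a, nn α a * dp a l β)
      - (dx β l α - ∑ a, nn β a * dp a l α))) = 0 := by
    intro h α β
    have h0 := hc2 h α β
    have hflip : (∑ l, W l h * ((dx α l β - ∑ a, nn α a * dp a l β)
        - (dx β l α - ∑ a, nn β a * dp a l α)))
        = - ∑ l, W h l * ((dx α l β - ∑ a, nn α a * dp a l β)
            - (dx β l α - ∑ a, nn β a * dp a l α)) := by
      rw [← Finset.sum_neg_distrib]
      exact Finset.sum_congr rfl fun l _ => by rw [hW l h]; ring
    rw [hflip, h0, neg_zero]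
  -- split the three big double sums
  have split : ∀ α β γ : Fin n,
      (∑ l, ∑ h, (pw α l h * (nn l β * nn h γ)
          + W l h * (dx α l β * nn h γ + nn l β * dx α h γ)))
      = (∑ l, ∑ h, pw α l h * (nn l β * nn h γ))
        + (∑ l, ∑ h, W l h * dx α l β * nn h γ)
        + (∑ l, ∑ h, W l h * nn l β * dx α h γ) := by
    intro α β γ
    rw [← Finset.sum_add_distrib, ← Finset.sum_add_distrib]
    refine Finset.sum_congr rfl fun l _ => ?_
    rw [← Finset.sum_add_distrib, ← Finset.sum_add_distrib]
    exact Finset.sum_congr rfl fun h _ => by ring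
  -- expand the pw-part via hc1
  have hU : ∀ α β γ : Fin n,
      (∑ l, ∑ h, pw α l h * (nn l β * nn h γ))
      = (∑ l, ∑ h, ∑ b, W l b * dp h b α * nn l β * nn h γ)
        - (∑ l, ∑ h, ∑ b, W h b * dp l b α * nn l β * nn h γ) := by
    intro α β γ
    rw [← Finset.sum_sub_distrib]
    refine Finset.sum_congr rfl fun l _ => ?_
    rw [← Finset.sum_sub_distrib]
    refine Finset.sum_congr rfl fun h _ => ?_
    rw [hc1 α l h, Finset.sum_mul, ← Finset.sum_sub_distrib]
    exact Finset.sum_congr rfl fun b _ => by ring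
  -- flip the second dx-part
  have hV2 : ∀ α β γ : Fin n,
      ((∑ l, ∑ h, W l h * dx α l γ * nn h β)
        + (∑ l, ∑ h, W l h * nn l β * dx α h γ)) = 0 := by
    intro α β γ
    exact sum2_cancel _ _ (fun a b => by rw [hW a b]; ring)
  -- the cv-identity for pairs of dx-terms
  have hV : ∀ α β γ : Fin n,
      ((∑ l, ∑ h, W l h * dx α l β * nn h γ)
        - (∑ l, ∑ h, W l h * dx β l α * nn h γ))
      = (∑ l, ∑ h, ∑ c, W l h * nn α c * dp c l β * nn h γ)
        - (∑ l, ∑ h, ∑ c, W l h * nn β c * dp c l α * nn h γ) := by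
    intro α β γ
    have mergeL : ((∑ l, ∑ h, W l h * dx α l β * nn h γ)
        - (∑ l, ∑ h, W l h * dx β l α * nn h γ))
        = ∑ l, ∑ h, (W l h * dx α l β * nn h γ - W l h * dx β l α * nn h γ) := by
      rw [← Finset.sum_sub_distrib]
      exact Finset.sum_congr rfl fun l _ => (Finset.sum_sub_distrib _ _).symm
    have mergeR : ((∑ l, ∑ h, ∑ c, W l h * nn α c * dp c l β * nn h γ)
        - (∑ l, ∑ h, ∑ c, W l h * nn β c * dp c l α * nn h γ))
        = ∑ l, ∑ h, ((∑ c, W l h * nn α c * dp c l β * nn h γ)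
            - (∑ c, W l h * nn β c * dp c l α * nn h γ)) := by
      rw [← Finset.sum_sub_distrib]
      exact Finset.sum_congr rfl fun l _ => (Finset.sum_sub_distrib _ _).symm
    have key : ∀ l h : Fin n,
        (W l h * dx α l β * nn h γ - W l h * dx β l α * nn h γ)
        - ((∑ c, W l h * nn α c * dp c l β * nn h γ)
            - (∑ c, W l h * nn β c * dp c l α * nn h γ))
        = W l h * ((dx α l β - ∑ a, nn α a * dp a l β)
            - (dx β l α - ∑ a, nn β a * dp a l α)) * nn h γ := by
      intro l h
      have m1 : (∑ c, W l h * nn α c * dp c l β * nn h γ)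
          = W l h * (∑ a, nn α a * dp a l β) * nn h γ := by
        rw [Finset.mul_sum, Finset.sum_mul]
        exact Finset.sum_congr rfl fun c _ => by ring
      have m2 : (∑ c, W l h * nn β c * dp c l α * nn h γ)
          = W l h * (∑ a, nn β a * dp a l α) * nn h γ := by
        rw [Finset.mul_sum, Finset.sum_mul]
        exact Finset.sum_congr rfl fun c _ => by ring
      rw [m1, m2]
      ring
    have z1 : (∑ l, ∑ h, W l h * ((dx α l β - ∑ a, nn α a * dp a l β)
        - (dx β l α - ∑ a, nn β a * dp a l α)) * nn h γ) = 0 := by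
      rw [Finset.sum_comm]
      refine Finset.sum_eq_zero fun h _ => ?_
      have : (∑ l, W l h * ((dx α l β - ∑ a, nn α a * dp a l β)
          - (dx β l α - ∑ a, nn β a * dp a l α)) * nn h γ)
          = (∑ l, W l h * ((dx α l β - ∑ a, nn α a * dp a l β)
              - (dx β l α - ∑ a, nn β a * dp a l α))) * nn h γ := by
        rw [Finset.sum_mul]
      rw [this, hc2' h α β, zero_mul]
    have comb : ((∑ l, ∑ h, (W l h * dx α l β * nn h γ - W l h * dx β l α * nn h γ))
        - ∑ l, ∑ h, ((∑ c, W l h * nn α c * dp c l β * nn h γ)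
            - (∑ c, W l h * nn β c * dp c l α * nn h γ)))
        = ∑ l, ∑ h, (((W l h * dx α l β * nn h γ - W l h * dx β l α * nn h γ))
            - ((∑ c, W l h * nn α c * dp c l β * nn h γ)
                - (∑ c, W l h * nn β c * dp c l α * nn h γ))) := by
      rw [← Finset.sum_sub_distrib]
      exact Finset.sum_congr rfl fun l _ => (Finset.sum_sub_distrib _ _).symm
    have comb2 : (∑ l, ∑ h, (((W l h * dx α l β * nn h γ - W l h * dx β l α * nn h γ))
        - ((∑ c, W l h * nn α c * dp c l β * nn h γ)
            - (∑ c, W l h * nn β c * dp c l α * nn h γ)))) = 0 := by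
      rw [sum2_congr (fun l h => key l h)]
      exact z1
    rw [mergeL, mergeR]
    linarith [comb, comb2]
  -- the six cancellations
  have canc1 : ((∑ l, ∑ h, ∑ c, W l h * nn i c * dp c l j * nn h k)
      + (∑ l, ∑ h, ∑ b, W l b * dp h b j * nn l k * nn h i)) = 0 :=
    sum3_cancel_rot _ _ (fun a b c => by rw [hW b a, hnn c i]; ring)
  have canc2 : ((∑ l, ∑ h, ∑ c, W l h * nn j c * dp c l i * nn h k)
      + (∑ l, ∑ h, ∑ b, W h b * dp l b i * nn l j * nn h k)) = 0 :=
    sum3_cancel_rev _ _ (fun a b c => by rw [hW b a, hnn c j]; ring)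
  have canc3 : ((∑ l, ∑ h, ∑ c, W l h * nn j c * dp c l k * nn h i)
      + (∑ l, ∑ h, ∑ b, W l b * dp h b k * nn l i * nn h j)) = 0 :=
    sum3_cancel_rot _ _ (fun a b c => by rw [hW b a, hnn c j]; ring)
  have canc4 : ((∑ l, ∑ h, ∑ c, W l h * nn k c * dp c l j * nn h i)
      + (∑ l, ∑ h, ∑ b, W h b * dp l b j * nn l k * nn h i)) = 0 :=
    sum3_cancel_rev _ _ (fun a b c => by rw [hW b a, hnn c k]; ring)
  have canc5 : ((∑ l, ∑ h, ∑ c, W l h * nn k c * dp c l i * nn h j)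
      + (∑ l, ∑ h, ∑ b, W l b * dp h b i * nn l j * nn h k)) = 0 :=
    sum3_cancel_rot _ _ (fun a b c => by rw [hW b a, hnn c k]; ring)
  have canc6 : ((∑ l, ∑ h, ∑ c, W l h * nn i c * dp c l k * nn h j)
      + (∑ l, ∑ h, ∑ b, W h b * dp l b k * nn l i * nn h j)) = 0 :=
    sum3_cancel_rev _ _ (fun a b c => by rw [hW b a, hnn c i]; ring)
  have s1 := split i j k
  have s2 := split j k i
  have s3 := split k i j
  have u1 := hU i j k
  have u2 := hU j k i
  have u3 := hU k i j
  have v1 := hV2 i j k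
  have v2 := hV2 j k i
  have v3 := hV2 k i j
  have w1 := hV i j k
  have w2 := hV j k i
  have w3 := hV k i j
  linarith [s1, s2, s3, u1, u2, u3, v1, v2, v3, w1, w2, w3,
    canc1, canc2, canc3, canc4, canc5, canc6]

end Alg3
section Comp

variable {n : ℕ} (w : Vec n → Fin n → Fin n → ℝ) (N : Cot n → Fin n → Fin n → ℝ)

def Bfun (i k : Fin n) : Cot n → ℝ := fun y => ∑ h, w y.1 i h * N y h k
def Afun (j k : Fin n) : Cot n → ℝ := fun y => ∑ l, ∑ h, w y.1 l h * N y l j * N y h k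

lemma DppEq (a : Fin n) : Dpp (n := n) a = DT (Sum.inr a) := rfl
lemma DxxEq (a : Fin n) : Dxx (n := n) a = DT (Sum.inl a) := rfl

lemma DT_B (hsm : SmoothM w) (hNsm : ∀ i j, Sm fun z => N z i j) (i k : Fin n) (c : Idx n) (z : Cot n) :
    DT c (Bfun w N i k) z = ∑ h, (DT c (fun y => w y.1 i h) z * N z h k
      + w z.1 i h * DT c (fun y => N y h k) z) := by
  unfold Bfun
  rw [DT_sum Finset.univ _ c z (fun h _ => Sm.dAt ((Sm_base _ (hsm i h)).mul (hNsm h k)) z)]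
  exact Finset.sum_congr rfl fun h _ =>
    DT_mul c z (Sm.dAt (Sm_base _ (hsm i h)) z) (Sm.dAt (hNsm h k) z)

lemma DT_A (hsm : SmoothM w) (hNsm : ∀ i j, Sm fun z => N z i j) (j k : Fin n) (c : Idx n) (z : Cot n) :
    DT c (Afun w N j k) z = ∑ l, ∑ h, (DT c (fun y => w y.1 l h) z * (N z l j * N z h k)
      + w z.1 l h * (DT c (fun y => N y l j) z * N z h k
          + N z l j * DT c (fun y => N y h k) z)) := by
  unfold Afun
  have hin : ∀ l h : Fin n, Sm (fun y : Cot n => w y.1 l h * N y l j * N y h k) :=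
    fun l h => ((Sm_base _ (hsm l h)).mul (hNsm l j)).mul (hNsm h k)
  rw [DT_sum Finset.univ _ c z
    (fun l _ => Sm.dAt (ContDiff.sum fun h _ => hin l h) z)]
  refine Finset.sum_congr rfl fun l _ => ?_
  rw [DT_sum Finset.univ _ c z (fun h _ => Sm.dAt (hin l h) z)]
  refine Finset.sum_congr rfl fun h _ => ?_
  rw [DT_mul c z (Sm.dAt ((Sm_base _ (hsm l h)).mul (hNsm l j)) z) (Sm.dAt (hNsm h k) z),
      DT_mul c z (Sm.dAt (Sm_base _ (hsm l h)) z) (Sm.dAt (hNsm l j) z)]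
  ring

lemma DppB (hsm : SmoothM w) (hNsm : ∀ i j, Sm fun z => N z i j) (a i k : Fin n) (z : Cot n) :
    Dpp a (Bfun w N i k) z = ∑ h, w z.1 i h * Dpp a (fun y => N y h k) z := by
  rw [DppEq, DT_B w N hsm hNsm i k (Sum.inr a) z]
  refine Finset.sum_congr rfl fun h _ => ?_
  rw [show DT (Sum.inr a) (fun y => w y.1 i h) z = 0 from Dpp_base _ (hsm i h) a z]
  ring

lemma DxxB (hsm : SmoothM w) (hNsm : ∀ i j, Sm fun z => N z i j) (a i k : Fin n) (z : Cot n) :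
    Dxx a (Bfun w N i k) z = ∑ h, (pd a (fun x => w x i h) z.1 * N z h k
      + w z.1 i h * Dxx a (fun y => N y h k) z) := by
  rw [DxxEq, DT_B w N hsm hNsm i k (Sum.inl a) z]
  refine Finset.sum_congr rfl fun h _ => ?_
  rw [show DT (Sum.inl a) (fun y => w y.1 i h) z = pd a (fun x => w x i h) z.1 from
    Dxx_base _ (hsm i h) a z]

lemma DppA (hsm : SmoothM w) (hNsm : ∀ i j, Sm fun z => N z i j) (a j k : Fin n) (z : Cot n) :
    Dpp a (Afun w N j k) z = ∑ l, ∑ h, w z.1 l h *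
      (Dpp a (fun y => N y l j) z * N z h k + N z l j * Dpp a (fun y => N y h k) z) := by
  rw [DppEq, DT_A w N hsm hNsm j k (Sum.inr a) z]
  refine sum2_congr fun l h => ?_
  rw [show DT (Sum.inr a) (fun y => w y.1 l h) z = 0 from Dpp_base _ (hsm l h) a z]
  rw [← DppEq]
  ring

lemma DxxA (hsm : SmoothM w) (hNsm : ∀ i j, Sm fun z => N z i j) (a j k : Fin n) (z : Cot n) :
    Dxx a (Afun w N j k) z = ∑ l, ∑ h, (pd a (fun x => w x l h) z.1 * (N z l j * N z h k)
      + w z.1 l h * (Dxx a (fun y => N y l j) z * N z h k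
          + N z l j * Dxx a (fun y => N y h k) z)) := by
  rw [DxxEq, DT_A w N hsm hNsm j k (Sum.inl a) z]
  refine sum2_congr fun l h => ?_
  rw [show DT (Sum.inl a) (fun y => w y.1 l h) z = pd a (fun x => w x l h) z.1 from
    Dxx_base _ (hsm l h) a z]

lemma WH_ll (i j : Fin n) :
    (fun y => WH w N y (Sum.inl i) (Sum.inl j)) = (fun y : Cot n => w y.1 i j) := rfl
lemma WH_lr (i k : Fin n) :
    (fun y => WH w N y (Sum.inl i) (Sum.inr k)) = (fun y => -(Bfun w N i k y)) := rfl
lemma WH_rl (k i : Fin n) :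
    (fun y => WH w N y (Sum.inr k) (Sum.inl i)) = Bfun w N i k := rfl
lemma WH_rr (j k : Fin n) :
    (fun y => WH w N y (Sum.inr j) (Sum.inr k)) = Afun w N j k := rfl

lemma tilde_neg (c : Idx n) (F : Cot n → ℝ) (z : Cot n) :
    tilde c (fun y => -(F y)) z = -(tilde c F z) := by
  cases c with
  | inl j => exact DT_neg _ F z
  | inr j =>
      show -(DT (Sum.inl j) (fun y => -(F y)) z) = -(-(DT (Sum.inl j) F z))
      rw [DT_neg]

lemma Ttri_cyc (z : Cot n) (a b d : Idx n) : Ttri w N z a b d = Ttri w N z b d a := by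
  unfold Ttri; ring

lemma Ttri_swap (hsk : SkewM w) (z : Cot n) (a b d : Idx n) :
    Ttri w N z b a d = -(Ttri w N z a b d) := by
  have ew : ∀ p q : Idx n, (fun y => WH w N y p q) = (fun y => -(WH w N y q p)) :=
    fun p q => funext fun y => skewWH hsk y p q
  unfold Ttri
  rw [ew a d, ew d b, ew b a, tilde_neg, tilde_neg, tilde_neg]
  ring

lemma comp_lll (hsm : SmoothM w) (hNsm : ∀ i j, Sm fun z => N z i j) (z : Cot n) (i j k : Fin n) :
    Ttri w N z (Sum.inl i) (Sum.inl j) (Sum.inl k) = 0 := by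
  have e : ∀ a b c : Fin n,
      tilde (Sum.inl a) (fun y => WH w N y (Sum.inl b) (Sum.inl c)) z = 0 := by
    intro a b c
    rw [tilde_inl, WH_ll]
    exact Dpp_base _ (hsm b c) a z
  unfold Ttri
  rw [e, e, e]
  ring

lemma comp_llr (hsm : SmoothM w) (hNsm : ∀ i j, Sm fun z => N z i j) (z : Cot n) (i j k : Fin n) :
    Ttri w N z (Sum.inl i) (Sum.inl j) (Sum.inr k)
      = -(pd k (fun y => w y i j) z.1
          + (∑ h, (w z.1 i h * PhiN N z j h k - w z.1 j h * PhiN N z i h k))) := by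
  unfold Ttri
  rw [tilde_inl, tilde_inl, tilde_inr, WH_lr, WH_rl, WH_ll]
  rw [show DT (Sum.inr i) (fun y => -(Bfun w N j k y)) z
      = -(DT (Sum.inr i) (Bfun w N j k) z) from DT_neg _ _ z]
  rw [show DT (Sum.inr i) (Bfun w N j k) z = Dpp i (Bfun w N j k) z from rfl,
      show DT (Sum.inr j) (Bfun w N i k) z = Dpp j (Bfun w N i k) z from rfl,
      show DT (Sum.inl k) (fun y : Cot n => w y.1 i j) z
        = pd k (fun x => w x i j) z.1 from Dxx_base _ (hsm i j) k z]
  rw [DppB w N hsm hNsm i j k z, DppB w N hsm hNsm j i k z]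
  have e1 : (∑ h, (w z.1 i h * PhiN N z j h k - w z.1 j h * PhiN N z i h k))
      = (∑ h, w z.1 j h * Dpp i (fun y => N y h k) z)
        - (∑ h, w z.1 i h * Dpp j (fun y => N y h k) z) := by
    rw [← Finset.sum_sub_distrib]
    refine Finset.sum_congr rfl fun h _ => ?_
    simp only [PhiN]
    ring
  rw [e1]
  ring

lemma comp_lrr_raw (hsm : SmoothM w) (hNsm : ∀ i j, Sm fun z => N z i j) (z : Cot n) (i j k : Fin n) :
    Ttri w N z (Sum.inl i) (Sum.inr j) (Sum.inr k)
      = Dpp i (Afun w N j k) z - Dxx j (Bfun w N i k) z + Dxx k (Bfun w N i j) z := by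
  unfold Ttri
  rw [tilde_inl, tilde_inr, tilde_inr, WH_rr, WH_rl, WH_lr]
  rw [show DT (Sum.inl k) (fun y => -(Bfun w N i j y)) z
      = -(DT (Sum.inl k) (Bfun w N i j) z) from DT_neg _ _ z]
  rw [show DT (Sum.inr i) (Afun w N j k) z = Dpp i (Afun w N j k) z from rfl,
      show DT (Sum.inl j) (Bfun w N i k) z = Dxx j (Bfun w N i k) z from rfl,
      show DT (Sum.inl k) (Bfun w N i j) z = Dxx k (Bfun w N i j) z from rfl]
  ring

lemma comp_rrr_raw (hsm : SmoothM w) (hNsm : ∀ i j, Sm fun z => N z i j) (z : Cot n) (i j k : Fin n) :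
    Ttri w N z (Sum.inr i) (Sum.inr j) (Sum.inr k)
      = -(Dxx i (Afun w N j k) z) - Dxx j (Afun w N k i) z - Dxx k (Afun w N i j) z := by
  unfold Ttri
  rw [tilde_inr, tilde_inr, tilde_inr, WH_rr, WH_rr, WH_rr]
  rw [show DT (Sum.inl i) (Afun w N j k) z = Dxx i (Afun w N j k) z from rfl,
      show DT (Sum.inl j) (Afun w N k i) z = Dxx j (Afun w N k i) z from rfl,
      show DT (Sum.inl k) (Afun w N i j) z = Dxx k (Afun w N i j) z from rfl]
  ring

end Comp

section Final

variable {n : ℕ} (w : Vec n → Fin n → Fin n → ℝ) (N : Cot n → Fin n → Fin n → ℝ)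

lemma cond1_reform
    (hc1 : ∀ z (i j k : Fin n), pd k (fun y => w y i j) z.1
      + (∑ h, (w z.1 i h * PhiN N z j h k - w z.1 j h * PhiN N z i h k)) = 0)
    (z : Cot n) : ∀ k i j : Fin n, pd k (fun x => w x i j) z.1
      = ∑ h, (w z.1 i h * Dpp j (fun y => N y h k) z
          - w z.1 j h * Dpp i (fun y => N y h k) z) := by
  intro k i j
  have h0 := hc1 z i j k
  have e1 : (∑ h, (w z.1 i h * PhiN N z j h k - w z.1 j h * PhiN N z i h k))
      = - ∑ h, (w z.1 i h * Dpp j (fun y => N y h k) z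
          - w z.1 j h * Dpp i (fun y => N y h k) z) := by
    rw [← Finset.sum_neg_distrib]
    refine Finset.sum_congr rfl fun h _ => ?_
    simp only [PhiN]
    ring
  rw [e1] at h0
  linarith

lemma comp_lrr_val (hsk : SkewM w) (hsm : SmoothM w)
    (hNsm : ∀ i j, Sm fun z => N z i j) (hNsym : ∀ z i j, N z i j = N z j i)
    (hc1 : ∀ z (i j k : Fin n), pd k (fun y => w y i j) z.1
      + (∑ h, (w z.1 i h * PhiN N z j h k - w z.1 j h * PhiN N z i h k)) = 0)
    (z : Cot n) (i j k : Fin n) :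
    Ttri w N z (Sum.inl i) (Sum.inr j) (Sum.inr k)
      = -∑ h, w z.1 i h * curvN N z h j k := by
  rw [comp_lrr_raw w N hsm hNsm z i j k,
      DppA w N hsm hNsm i j k z, DxxB w N hsm hNsm j i k z, DxxB w N hsm hNsm k i j z]
  have halg := key2alg (w z.1) (fun a b => N z a b)
      (fun a l m => Dpp a (fun y => N y l m) z)
      (fun a l m => Dxx a (fun y => N y l m) z)
      (fun a l m => pd a (fun x => w x l m) z.1)
      (fun a b => hsk z.1 a b) (fun a b => hNsym z a b)
      (cond1_reform w N hc1 z) i j k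
  have ecurv : ∀ h : Fin n, curvN N z h j k
      = ((Dxx j (fun y => N y h k) z - ∑ a, N z j a * Dpp a (fun y => N y h k) z)
          - (Dxx k (fun y => N y h j) z
              - ∑ a, N z k a * Dpp a (fun y => N y h j) z)) := fun h => rfl
  simp only [ecurv]
  exact halg

lemma comp_rrr_val (hsk : SkewM w) (hsm : SmoothM w)
    (hNsm : ∀ i j, Sm fun z => N z i j) (hNsym : ∀ z i j, N z i j = N z j i)
    (hc1 : ∀ z (i j k : Fin n), pd k (fun y => w y i j) z.1
      + (∑ h, (w z.1 i h * PhiN N z j h k - w z.1 j h * PhiN N z i h k)) = 0)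
    (hc2 : ∀ z (i j k : Fin n), ∑ h, w z.1 i h * curvN N z h j k = 0)
    (z : Cot n) (i j k : Fin n) :
    Ttri w N z (Sum.inr i) (Sum.inr j) (Sum.inr k) = 0 := by
  rw [comp_rrr_raw w N hsm hNsm z i j k,
      DxxA w N hsm hNsm i j k z, DxxA w N hsm hNsm j k i z, DxxA w N hsm hNsm k i j z]
  have halg := key3alg (w z.1) (fun a b => N z a b)
      (fun a l m => Dpp a (fun y => N y l m) z)
      (fun a l m => Dxx a (fun y => N y l m) z)
      (fun a l m => pd a (fun x => w x l m) z.1)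
      (fun a b => hsk z.1 a b) (fun a b => hNsym z a b)
      (cond1_reform w N hc1 z) (fun i' j' k' => hc2 z i' j' k') i j k
  linarith [halg]

lemma Ttri_zero (hsk : SkewM w) (hsm : SmoothM w)
    (hNsm : ∀ i j, Sm fun z => N z i j) (hNsym : ∀ z i j, N z i j = N z j i)
    (hc1 : ∀ z (i j k : Fin n), pd k (fun y => w y i j) z.1
      + (∑ h, (w z.1 i h * PhiN N z j h k - w z.1 j h * PhiN N z i h k)) = 0)
    (hc2 : ∀ z (i j k : Fin n), ∑ h, w z.1 i h * curvN N z h j k = 0)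
    (z : Cot n) (a b d : Idx n) : Ttri w N z a b d = 0 := by
  have Zllr : ∀ i j k : Fin n, Ttri w N z (Sum.inl i) (Sum.inl j) (Sum.inr k) = 0 := by
    intro i j k
    rw [comp_llr w N hsm hNsm z i j k, hc1 z i j k, neg_zero]
  have Zlrr : ∀ i j k : Fin n, Ttri w N z (Sum.inl i) (Sum.inr j) (Sum.inr k) = 0 := by
    intro i j k
    rw [comp_lrr_val w N hsk hsm hNsm hNsym hc1 z i j k, hc2 z i j k, neg_zero]
  rcases a with i | i <;> rcases b with j | j <;> rcases d with k | k
  · exact comp_lll w N hsm hNsm z i j k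
  · exact Zllr i j k
  · rw [Ttri_swap w N hsk z (Sum.inr j) (Sum.inl i) (Sum.inl k),
        Ttri_cyc w N z (Sum.inr j) (Sum.inl i) (Sum.inl k), Zllr i k j, neg_zero]
  · exact Zlrr i j k
  · rw [Ttri_cyc w N z (Sum.inr i) (Sum.inl j) (Sum.inl k), Zllr j k i]
  · rw [Ttri_swap w N hsk z (Sum.inl j) (Sum.inr i) (Sum.inr k), Zlrr j i k, neg_zero]
  · rw [Ttri_cyc w N z (Sum.inr i) (Sum.inr j) (Sum.inl k),
        Ttri_cyc w N z (Sum.inr j) (Sum.inl k) (Sum.inr i), Zlrr k i j]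
  · exact comp_rrr_val w N hsk hsm hNsm hNsym hc1 hc2 z i j k

def cofun : Idx n → Cot n → ℝ
  | Sum.inl i => fun z => z.1 i
  | Sum.inr i => fun z => z.2 i

lemma Sm_cofun (a : Idx n) : Sm (cofun a) := by
  cases a with
  | inl i => exact Sm_cx i
  | inr i => exact Sm_cp i

lemma DT_cofun (a0 a : Idx n) (z : Cot n) :
    DT a (cofun a0) z = if a = a0 then 1 else 0 := by
  cases a0 with
  | inl i => exact DT_cx i a z
  | inr i => exact DT_cp i a z

lemma extract (hsk : SkewM w) (hsm : SmoothM w)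
    (hNsm : ∀ i j, Sm fun z => N z i j)
    (hcompat : Compat (WH w N) W0c) (z : Cot n) (a0 b0 d0 : Idx n) :
    Ttri w N z a0 b0 d0 = 0 := by
  have h0 := hcompat (cofun a0) (cofun b0) (cofun d0)
    (Sm_cofun a0) (Sm_cofun b0) (Sm_cofun d0) z
  rw [Sigma_eq w hsk hsm N hNsm (cofun a0) (cofun b0) (cofun d0)
    (Sm_cofun a0) (Sm_cofun b0) (Sm_cofun d0) z] at h0
  simp only [DT_cofun] at h0
  have c1 : ∀ (t : Idx n → ℝ) (x0 : Idx n),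
      (∑ x, t x * (if x = x0 then (1:ℝ) else 0)) = t x0 := by
    intro t x0
    simp [mul_ite, mul_one, mul_zero]
  simp only [c1] at h0
  exact h0

lemma compat_of (hsk : SkewM w) (hsm : SmoothM w)
    (hNsm : ∀ i j, Sm fun z => N z i j) (hNsym : ∀ z i j, N z i j = N z j i)
    (hc1 : ∀ z (i j k : Fin n), pd k (fun y => w y i j) z.1
      + (∑ h, (w z.1 i h * PhiN N z j h k - w z.1 j h * PhiN N z i h k)) = 0)
    (hc2 : ∀ z (i j k : Fin n), ∑ h, w z.1 i h * curvN N z h j k = 0) :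
    Compat (WH w N) W0c := by
  intro F G H hF hG hH z
  rw [Sigma_eq w hsk hsm N hNsm F G H hF hG hH z]
  refine Finset.sum_eq_zero fun a _ => Finset.sum_eq_zero fun b _ =>
    Finset.sum_eq_zero fun d _ => ?_
  rw [Ttri_zero w N hsk hsm hNsm hNsym hc1 hc2 z a b d]
  ring

lemma bianchi (hNsym : ∀ z i j, N z i j = N z j i) (z : Cot n) (k i j : Fin n) :
    curvN N z k i j + curvN N z i j k + curvN N z j k i = 0 := by
  have e : ∀ a b : Fin n, (fun y => N y a b) = (fun y => N y b a) :=
    fun a b => funext fun y => hNsym y a b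
  simp only [curvN]
  rw [e k i, e j i, e j k]
  ring

lemma part3 (hNsym : ∀ z i j, N z i j = N z j i)
    (hc2 : ∀ z (i j k : Fin n), ∑ h, w z.1 i h * curvN N z h j k = 0)
    (z : Cot n) (k i j : Fin n) :
    ∑ l, ∑ h, w z.1 i l * w z.1 j h * curvN N z k l h = 0 := by
  have step : ∀ l h : Fin n, w z.1 i l * w z.1 j h * curvN N z k l h
      = -(w z.1 j h * (w z.1 i l * curvN N z l h k))
        - (w z.1 i l * (w z.1 j h * curvN N z h k l)) := by
    intro l h
    have hb := bianchi N hNsym z k l h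
    linear_combination (w z.1 i l * w z.1 j h) * hb
  rw [sum2_congr step]
  have e1 : (∑ l, ∑ h, (-(w z.1 j h * (w z.1 i l * curvN N z l h k))
      - (w z.1 i l * (w z.1 j h * curvN N z h k l))))
      = (∑ l, ∑ h, -(w z.1 j h * (w z.1 i l * curvN N z l h k)))
        + (∑ l, ∑ h, -(w z.1 i l * (w z.1 j h * curvN N z h k l))) := by
    rw [← Finset.sum_add_distrib]
    refine Finset.sum_congr rfl fun l _ => ?_
    rw [← Finset.sum_add_distrib]
    exact Finset.sum_congr rfl fun h _ => by ring
  rw [e1]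
  have z1 : (∑ l, ∑ h, -(w z.1 j h * (w z.1 i l * curvN N z l h k))) = 0 := by
    rw [Finset.sum_comm]
    refine Finset.sum_eq_zero fun h _ => ?_
    have : (∑ l, -(w z.1 j h * (w z.1 i l * curvN N z l h k)))
        = -(w z.1 j h * ∑ l, w z.1 i l * curvN N z l h k) := by
      rw [Finset.mul_sum, Finset.sum_neg_distrib]
    rw [this, hc2 z i h k, mul_zero, neg_zero]
  have z2 : (∑ l, ∑ h, -(w z.1 i l * (w z.1 j h * curvN N z h k l))) = 0 := by
    refine Finset.sum_eq_zero fun l _ => ?_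
    have : (∑ h, -(w z.1 i l * (w z.1 j h * curvN N z h k l)))
        = -(w z.1 i l * ∑ h, w z.1 j h * curvN N z h k l) := by
      rw [Finset.mul_sum, Finset.sum_neg_distrib]
    rw [this, hc2 z j k l, mul_zero, neg_zero]
  rw [z1, z2, add_zero]

end Final



/-- if `w^H` is Poisson, then `[w^H, W₀] = 0` iff
`∂w^{ij}/∂x^k + w^{ih}Φ^j_{hk} - w^{jh}Φ^i_{hk} = 0` and `w^{ih}R_{hjk} = 0`; moreover the
Bianchi identity `R_{kij} + R_{ijk} + R_{jki} = 0` holds, and the second condition implies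
the Poisson condition `w^{il}w^{jh}R_{klh} = 0`. -/
theorem stmt17 {n : ℕ} (w : Vec n → Fin n → Fin n → ℝ) (hsk : SkewM w) (hsm : SmoothM w)
    (N : Cot n → Fin n → Fin n → ℝ) (hNsm : ∀ i j, Sm fun z => N z i j)
    (hNsym : ∀ z i j, N z i j = N z j i)
    (hPoisson : JacobiT (WH w N)) :
    (Compat (WH w N) W0c ↔
      ((∀ z (i j k : Fin n), pd k (fun y => w y i j) z.1
          + (∑ h, (w z.1 i h * PhiN N z j h k - w z.1 j h * PhiN N z i h k)) = 0) ∧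
       (∀ z (i j k : Fin n), ∑ h, w z.1 i h * curvN N z h j k = 0))) ∧
    (∀ z (k i j : Fin n), curvN N z k i j + curvN N z i j k + curvN N z j k i = 0) ∧
    ((∀ z (i j k : Fin n), ∑ h, w z.1 i h * curvN N z h j k = 0) →
      (∀ z (k i j : Fin n), ∑ l, ∑ h, w z.1 i l * w z.1 j h * curvN N z k l h = 0)) := by
  refine ⟨⟨?_, ?_⟩, fun z k i j => bianchi N hNsym z k i j,
    fun hc2 z k i j => part3 w N hNsym hc2 z k i j⟩
  · intro hcompat
    have hT := extract w N hsk hsm hNsm hcompat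
    have hc1 : ∀ z (i j k : Fin n), pd k (fun y => w y i j) z.1
        + (∑ h, (w z.1 i h * PhiN N z j h k - w z.1 j h * PhiN N z i h k)) = 0 := by
      intro z i j k
      have h0 := hT z (Sum.inl i) (Sum.inl j) (Sum.inr k)
      rw [comp_llr w N hsm hNsm z i j k] at h0
      linarith
    refine ⟨hc1, ?_⟩
    intro z i j k
    have h0 := hT z (Sum.inl i) (Sum.inr j) (Sum.inr k)
    rw [comp_lrr_val w N hsk hsm hNsm hNsym hc1 z i j k] at h0
    linarith
  · rintro ⟨hc1, hc2⟩
    exact compat_of w N hsk hsm hNsm hNsym hc1 hc2
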